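/- arXiv:0809.0744 — 2 statements merged into one kernel-verified Lean document; each statement's English description precedes it below -/
import Mathlib

section
/- If (X, d) is a compact strictly quasihypermetric space, then there exists at most one d-invariant measure in M₁(X): if μ, ν ∈ M₁(X) each have constant d-potential (d_μ ≡ c₁, d_ν ≡ c₂ for constants c₁, c₂), then μ = ν. -/
open MeasureTheory

/-- Integral of a function against a finite signed Borel measure, via Jordan decomposition. -/
noncomputable def sInt {X : Type*} [MeasurableSpace X] (μ : SignedMeasure X) (f : X → ℝ) : ℝ :=
  (∫ x, f x ∂μ.toJordanDecomposition.posPart) - ∫ x, f x ∂μ.toJordanDecomposition.negPart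

/-- Energy `I(μ, ν) = ∫∫ d(x,y) dμ(x) dν(y)` with respect to a kernel `d`. -/
noncomputable def en {X : Type*} [MeasurableSpace X] (d : X → X → ℝ)
    (μ ν : SignedMeasure X) : ℝ :=
  sInt μ (fun x => sInt ν (fun y => d x y))

/-- The potential `d_μ(x) = ∫ d(x,y) dμ(y)`. -/
noncomputable def dPot {X : Type*} [MeasurableSpace X] (d : X → X → ℝ)
    (μ : SignedMeasure X) (x : X) : ℝ :=
  sInt μ (fun y => d x y)

/-- The set of energies `I(μ)` of signed Borel measures of total mass one. -/
noncomputable def MSet (X : Type*) [MetricSpace X] [MeasurableSpace X] : Set ℝ :=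
  {r | ∃ μ : SignedMeasure X, μ Set.univ = (1 : ℝ) ∧ en (fun x y => dist x y) μ μ = r}

/-!
The difference `φ = μ - ν` has mass zero and constant potential `d_φ ≡ c₁ - c₂`, so
`I(φ) = ∫ d_φ dφ = (c₁ - c₂) φ(X) = 0`; strict quasihypermetricity then forces `φ = 0`.
-/

lemma sInt_const {X : Type*} [MeasurableSpace X] (μ : SignedMeasure X) (c : ℝ) :
    sInt μ (fun _ => c) = c * μ Set.univ := by
  have h := congrArg (fun s : SignedMeasure X => s Set.univ)
    μ.toSignedMeasure_toJordanDecomposition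
  simp only [JordanDecomposition.toSignedMeasure, _root_.sub_apply,
    Measure.toSignedMeasure_apply_measurable MeasurableSet.univ] at h
  simp only [sInt, integral_const, smul_eq_mul, ← h]
  ring

/-- Stated without subtraction, since measures do not form a group. -/
lemma MeasureTheory.SignedMeasure.toJordanDecomposition_sub_posPart_add {X : Type*} [MeasurableSpace X]
    (μ ν : SignedMeasure X) :
    (μ - ν).toJordanDecomposition.posPart + μ.toJordanDecomposition.negPart
      + ν.toJordanDecomposition.posPart
    = (μ - ν).toJordanDecomposition.negPart + μ.toJordanDecomposition.posPart
      + ν.toJordanDecomposition.negPart := by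
  rw [← Measure.toSignedMeasure_eq_toSignedMeasure_iff, ← sub_eq_zero]
  simp only [Measure.toSignedMeasure_add]
  have hφ := (μ - ν).toSignedMeasure_toJordanDecomposition
  have hμ := μ.toSignedMeasure_toJordanDecomposition
  have hν := ν.toSignedMeasure_toJordanDecomposition
  simp only [JordanDecomposition.toSignedMeasure] at hφ hμ hν
  calc _ = ((μ - ν).toJordanDecomposition.posPart.toSignedMeasure
          - (μ - ν).toJordanDecomposition.negPart.toSignedMeasure)
        - (μ.toJordanDecomposition.posPart.toSignedMeasure
          - μ.toJordanDecomposition.negPart.toSignedMeasure)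
        + (ν.toJordanDecomposition.posPart.toSignedMeasure
          - ν.toJordanDecomposition.negPart.toSignedMeasure) := by abel
    _ = 0 := by rw [hφ, hμ, hν]; abel

lemma sInt_sub {X : Type*} [TopologicalSpace X] [CompactSpace X] [MeasurableSpace X]
    [OpensMeasurableSpace X] (μ ν : SignedMeasure X) {f : X → ℝ} (hf : Continuous f) :
    sInt (μ - ν) f = sInt μ f - sInt ν f := by
  have hi : ∀ (ρ : Measure X) [IsFiniteMeasure ρ], Integrable f ρ := fun ρ _ =>
    hf.integrable_of_hasCompactSupport (HasCompactSupport.of_compactSpace f)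
  have key := congrArg (fun ρ : Measure X => ∫ x, f x ∂ρ)
    (μ.toJordanDecomposition_sub_posPart_add ν)
  simp only [integral_add_measure ((hi _).add_measure (hi _)) (hi _),
    integral_add_measure (hi _) (hi _)] at key
  simp only [sInt]
  linarith

lemma dPot_sub {X : Type*} [TopologicalSpace X] [CompactSpace X] [MeasurableSpace X]
    [OpensMeasurableSpace X] {d : X → X → ℝ} (x : X) (hd : Continuous (d x))
    (μ ν : SignedMeasure X) :
    dPot d (μ - ν) x = dPot d μ x - dPot d ν x :=
  sInt_sub μ ν hd

lemma en_self_of_dPot_eq_const {X : Type*} [MeasurableSpace X] {d : X → X → ℝ}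
    {φ : SignedMeasure X} {c : ℝ} (h : ∀ x, dPot d φ x = c) :
    en d φ φ = c * φ Set.univ := by
  have hpot : (fun x => sInt φ (fun y => d x y)) = fun _ => c := funext h
  rw [en, hpot, sInt_const]

/-- In a compact strictly quasihypermetric space there is at most one `d`-invariant
mass-one measure. -/
theorem stmt3 {X : Type*} [MetricSpace X] [CompactSpace X] [MeasurableSpace X] [BorelSpace X]
    (hq : ∀ φ : SignedMeasure X, φ Set.univ = (0 : ℝ) →
      en (fun x y => dist x y) φ φ ≤ 0 ∧ (en (fun x y => dist x y) φ φ = 0 → φ = 0))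
    (μ ν : SignedMeasure X) (hμ : μ Set.univ = (1 : ℝ)) (hν : ν Set.univ = (1 : ℝ))
    (c₁ c₂ : ℝ)
    (h1 : ∀ x : X, dPot (fun x y => dist x y) μ x = c₁)
    (h2 : ∀ x : X, dPot (fun x y => dist x y) ν x = c₂) :
    μ = ν := by
  have hmass : (μ - ν) Set.univ = 0 := by
    rw [_root_.sub_apply, hμ, hν, sub_self]
  have hpot : ∀ x, dPot (fun x y => dist x y) (μ - ν) x = c₁ - c₂ := fun x => by
    rw [dPot_sub x (continuous_const.dist continuous_id), h1, h2]
  have henergy : en (fun x y => dist x y) (μ - ν) (μ - ν) = 0 := by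
    rw [en_self_of_dPot_eq_const hpot, hmass, mul_zero]
  exact sub_eq_zero.mp ((hq _ hmass).2 henergy)
end

section
/- Let (X, d) be a compact quasihypermetric space with M(X) < ∞, equipped with the semi-inner product (μ | ν) = (M(X)+1)μ(X)ν(X) − I(μ,ν) on signed measures. A sequence μ_n in M₁(X) satisfies I(μ_n) → M(X) (is maximal) if and only if ‖μ_n − μ_m‖ → 0 as n, m → ∞ and (μ_n | ν) → 0 for every signed measure ν of mass 0. -/
open MeasureTheory

/-!
Write `B(μ, ν) = M(X) μ(X) ν(X) - I(μ, ν)`. Quasihypermetricity and the definition of `M(X)` make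
`B` positive semidefinite, and `inf B = 0` on the affine hyperplane `A` of mass-one measures, so
the theorem is a fact about a semidefinite form and a hyperplane on which it is not bounded away
from `0`. If `B(xₙ) → 0`, the parallelogram law gives `B(xₚ - x_q) ≤ 2 B(xₚ) + 2 B(x_q) → 0` and
Cauchy–Schwarz gives `B(xₙ, ν) → 0`. Conversely, for `σ ∈ A` with `B(σ)` small,
`B(xₙ) = B(xₙ, xₙ - x_N) + B(xₙ, x_N - σ) + B(xₙ, σ)`: the middle term tends to `0` because
`x_N - σ` has mass `0`, and the outer ones are `√B(xₙ)` times something small.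
-/

open Filter Topology

namespace LinearMap.BilinForm

variable {M : Type*} [AddCommGroup M] [Module ℝ M] {B : LinearMap.BilinForm ℝ M}

theorem apply_sub_sub_le (hs : ∀ x, 0 ≤ B x x) (x y : M) :
    B (x - y) (x - y) ≤ 2 * B x x + 2 * B y y := by
  have := hs (x + y)
  simp only [map_add, map_sub, LinearMap.add_apply, LinearMap.sub_apply] at this ⊢
  linarith

theorem abs_apply_le_sqrt_mul_sqrt (hs : ∀ x, 0 ≤ B x x) (hB : LinearMap.IsSymm B) (x y : M) :
    |B x y| ≤ √(B x x) * √(B y y) := by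
  rw [← Real.sqrt_mul (hs x)]
  exact Real.abs_le_sqrt (B.apply_sq_le_of_symm hs hB x y)

theorem apply_self_le_sqrt_mul_add (hs : ∀ x, 0 ≤ B x x) (hB : LinearMap.IsSymm B)
    (x y σ : M) :
    B x x ≤ √(B x x) * (√(B (x - y) (x - y)) + √(B σ σ)) + B x (y - σ) := by
  have hsplit : B x x = B x (x - y) + B x σ + B x (y - σ) := by
    simp only [map_sub]
    ring
  have h₁ := (le_abs_self _).trans (abs_apply_le_sqrt_mul_sqrt hs hB x (x - y))
  have h₂ := (le_abs_self _).trans (abs_apply_le_sqrt_mul_sqrt hs hB x σ)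
  linarith

variable {x : ℕ → M}

theorem cauchy_of_tendsto_apply_self (hs : ∀ x, 0 ≤ B x x)
    (h : Tendsto (fun n => B (x n) (x n)) atTop (𝓝 0)) :
    ∀ ε > 0, ∃ N, ∀ p ≥ N, ∀ q ≥ N, √(B (x p - x q) (x p - x q)) < ε := by
  intro ε hε
  obtain ⟨N, hN⟩ :=
    eventually_atTop.1 (h.eventually (gt_mem_nhds (by positivity : 0 < ε ^ 2 / 4)))
  refine ⟨N, fun p hp q hq => (Real.sqrt_lt' hε).2 ?_⟩
  linarith [apply_sub_sub_le hs (x p) (x q), hN p hp, hN q hq]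

theorem tendsto_apply_of_tendsto_apply_self (hs : ∀ x, 0 ≤ B x x) (hB : LinearMap.IsSymm B)
    (h : Tendsto (fun n => B (x n) (x n)) atTop (𝓝 0)) (ν : M) :
    Tendsto (fun n => B (x n) ν) atTop (𝓝 0) := by
  have hbound : Tendsto (fun n => √(B (x n) (x n)) * √(B ν ν)) atTop (𝓝 0) := by
    simpa using h.sqrt.mul_const (√(B ν ν))
  exact squeeze_zero_norm (fun n => abs_apply_le_sqrt_mul_sqrt hs hB (x n) ν) hbound

theorem tendsto_apply_self_of_cauchy (hs : ∀ x, 0 ≤ B x x) (hB : LinearMap.IsSymm B)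
    (φ : M →ₗ[ℝ] ℝ)
    (hφ : ∀ ε > 0, ∃ σ, φ σ = 1 ∧ B σ σ < ε) (hx : ∀ n, φ (x n) = 1)
    (hcauchy : ∀ ε > 0, ∃ N, ∀ p ≥ N, ∀ q ≥ N, √(B (x p - x q) (x p - x q)) < ε)
    (hweak : ∀ ν, φ ν = 0 → Tendsto (fun n => B (x n) ν) atTop (𝓝 0)) :
    Tendsto (fun n => B (x n) (x n)) atTop (𝓝 0) := by
  suffices hsqrt : Tendsto (fun n => √(B (x n) (x n))) atTop (𝓝 0) by
    simpa [Real.sq_sqrt (hs _)] using hsqrt.pow 2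
  refine tendsto_order.2 ⟨fun _ ha => Eventually.of_forall fun _ =>
    ha.trans_le (Real.sqrt_nonneg _), fun ε hε => ?_⟩
  obtain ⟨δ, hδ, rfl⟩ : ∃ δ > 0, ε = 3 * δ := ⟨ε / 3, by positivity, by ring⟩
  obtain ⟨σ, hσ₁, hσ⟩ := hφ (δ ^ 2) (by positivity)
  obtain ⟨N, hN⟩ := hcauchy δ hδ
  have hmass : φ (x N - σ) = 0 := by rw [map_sub, hx, hσ₁, sub_self]
  filter_upwards [eventually_ge_atTop N,
    (hweak _ hmass).eventually (gt_mem_nhds (by positivity : 0 < δ ^ 2))] with n hn hsmall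
  set s := √(B (x n) (x n))
  have hs₀ : 0 ≤ s := Real.sqrt_nonneg _
  have hσ' : √(B σ σ) < δ := (Real.sqrt_lt' hδ).2 hσ
  have hclose : s * (√(B (x n - x N) (x n - x N)) + √(B σ σ)) ≤ s * (2 * δ) :=
    mul_le_mul_of_nonneg_left (by linarith [hN n hn N le_rfl]) hs₀
  have key : s ^ 2 ≤ s * (2 * δ) + δ ^ 2 := by
    rw [Real.sq_sqrt (hs (x n))]
    linarith [apply_self_le_sqrt_mul_add hs hB (x n) (x N) σ]
  by_contra! h3
  nlinarith [mul_nonneg (sub_nonneg.2 h3) hs₀, mul_nonneg (sub_nonneg.2 h3) hδ.le]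

theorem tendsto_apply_self_iff (hs : ∀ x, 0 ≤ B x x) (hB : LinearMap.IsSymm B)
    (φ : M →ₗ[ℝ] ℝ)
    (hφ : ∀ ε > 0, ∃ σ, φ σ = 1 ∧ B σ σ < ε) (hx : ∀ n, φ (x n) = 1) :
    Tendsto (fun n => B (x n) (x n)) atTop (𝓝 0) ↔
      (∀ ε > 0, ∃ N, ∀ p ≥ N, ∀ q ≥ N, √(B (x p - x q) (x p - x q)) < ε) ∧
        ∀ ν, φ ν = 0 → Tendsto (fun n => B (x n) ν) atTop (𝓝 0) :=
  ⟨fun h => ⟨cauchy_of_tendsto_apply_self hs h,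
    fun ν _ => tendsto_apply_of_tendsto_apply_self hs hB h ν⟩,
    fun ⟨hcauchy, hweak⟩ => tendsto_apply_self_of_cauchy hs hB φ hφ hx hcauchy hweak⟩

end LinearMap.BilinForm

section SignedIntegral

variable {X : Type*} [MeasurableSpace X]

variable (X) in
def mass : SignedMeasure X →ₗ[ℝ] ℝ where
  toFun μ := μ Set.univ
  map_add' _ _ := rfl
  map_smul' _ _ := rfl

theorem sInt_eq_integral_sub {μ : SignedMeasure X} {P N : Measure X} [IsFiniteMeasure P]
    [IsFiniteMeasure N] (h : μ = P.toSignedMeasure - N.toSignedMeasure) {f : X → ℝ}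
    (hf : ∀ (ρ : Measure X) [IsFiniteMeasure ρ], Integrable f ρ) :
    sInt μ f = (∫ x, f x ∂P) - ∫ x, f x ∂N := by
  set j := μ.toJordanDecomposition
  have hj : j.posPart + N = j.negPart + P := by
    ext s hs
    have hs' := congrArg (· s) (μ.toSignedMeasure_toJordanDecomposition.trans h)
    simp only [JordanDecomposition.toSignedMeasure, sub_apply,
      Measure.toSignedMeasure_apply_measurable hs] at hs'
    rw [Measure.add_apply, Measure.add_apply, ← ENNReal.toReal_eq_toReal_iff' (by finiteness)
      (by finiteness), ENNReal.toReal_add (by finiteness) (by finiteness),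
      ENNReal.toReal_add (by finiteness) (by finiteness)]
    simp only [measureReal_def] at hs'
    linarith
  have hint := congrArg (fun ρ => ∫ x, f x ∂ρ) hj
  simp only [integral_add_measure (hf _) (hf _)] at hint
  rw [sInt]
  linarith

theorem sInt_add {f : X → ℝ} (hf : ∀ (ρ : Measure X) [IsFiniteMeasure ρ], Integrable f ρ)
    (μ ν : SignedMeasure X) : sInt (μ + ν) f = sInt μ f + sInt ν f := by
  have hdec : μ + ν =
      (μ.toJordanDecomposition.posPart + ν.toJordanDecomposition.posPart).toSignedMeasure -
        (μ.toJordanDecomposition.negPart + ν.toJordanDecomposition.negPart).toSignedMeasure := by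
    rw [Measure.toSignedMeasure_add, Measure.toSignedMeasure_add]
    nth_rewrite 1 [← μ.toSignedMeasure_toJordanDecomposition,
      ← ν.toSignedMeasure_toJordanDecomposition]
    simp only [JordanDecomposition.toSignedMeasure]
    abel
  rw [sInt_eq_integral_sub hdec hf, integral_add_measure (hf _) (hf _),
    integral_add_measure (hf _) (hf _), sInt, sInt]
  ring

theorem sInt_neg (μ : SignedMeasure X) (f : X → ℝ) : sInt (-μ) f = -sInt μ f := by
  simp [sInt, SignedMeasure.toJordanDecomposition_neg, JordanDecomposition.neg_posPart,
    JordanDecomposition.neg_negPart]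

theorem sInt_smul_of_nonneg {r : ℝ} (hr : 0 ≤ r) (μ : SignedMeasure X) (f : X → ℝ) :
    sInt (r • μ) f = r * sInt μ f := by
  rw [sInt, sInt, SignedMeasure.toJordanDecomposition_smul_real,
    JordanDecomposition.real_smul_posPart_nonneg _ _ hr,
    JordanDecomposition.real_smul_negPart_nonneg _ _ hr,
    integral_smul_nnreal_measure, integral_smul_nnreal_measure]
  simp [NNReal.smul_def, Real.coe_toNNReal r hr, mul_sub]

theorem sInt_smul (r : ℝ) (μ : SignedMeasure X) (f : X → ℝ) :
    sInt (r • μ) f = r * sInt μ f := by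
  rcases le_or_gt 0 r with hr | hr
  · exact sInt_smul_of_nonneg hr μ f
  · have hneg : r • μ = -((-r) • μ) := by ext s; simp
    rw [hneg, sInt_neg, sInt_smul_of_nonneg (neg_nonneg.2 hr.le)]
    ring

theorem en_smul_left (d : X → X → ℝ) (r : ℝ) (μ σ : SignedMeasure X) :
    en d (r • μ) σ = r * en d μ σ :=
  sInt_smul r μ _

end SignedIntegral

section CompactMetric

variable {X : Type*} [MetricSpace X] [CompactSpace X] [MeasurableSpace X] [BorelSpace X]

theorem Continuous.integrable_of_compactSpace {f : X → ℝ} (hf : Continuous f) (ρ : Measure X)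
    [IsFiniteMeasure ρ] : Integrable f ρ :=
  hf.integrable_of_hasCompactSupport (HasCompactSupport.of_compactSpace f)

theorem continuous_integral_dist (ρ : Measure X) [IsFiniteMeasure ρ] :
    Continuous fun x => ∫ y, dist x y ∂ρ := by
  simpa using continuous_parametric_integral_of_continuous (μ := ρ)
    (f := fun x y : X => dist x y) continuous_dist isCompact_univ

theorem continuous_dPot (ν : SignedMeasure X) : Continuous (dPot (fun x y => dist x y) ν) :=
  (continuous_integral_dist _).sub (continuous_integral_dist _)

theorem en_add_left (μ ν σ : SignedMeasure X) :
    en (fun x y => dist x y) (μ + ν) σ =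
      en (fun x y => dist x y) μ σ + en (fun x y => dist x y) ν σ :=
  sInt_add (continuous_dPot σ).integrable_of_compactSpace μ ν

theorem integral_integral_dist_comm (ρ σ : Measure X) [IsFiniteMeasure ρ] [IsFiniteMeasure σ] :
    ∫ x, ∫ y, dist x y ∂σ ∂ρ = ∫ y, ∫ x, dist y x ∂ρ ∂σ := by
  rw [integral_integral_swap]
  · simp_rw [dist_comm]
  · exact (continuous_dist.comp (continuous_fst.prodMk continuous_snd)).integrable_of_compactSpace
      _

theorem en_comm (μ ν : SignedMeasure X) :
    en (fun x y => dist x y) μ ν = en (fun x y => dist x y) ν μ := by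
  simp only [en, sInt]
  rw [integral_sub, integral_sub, integral_sub, integral_sub]
  · set μ' := μ.toJordanDecomposition
    set ν' := ν.toJordanDecomposition
    rw [integral_integral_dist_comm μ'.posPart ν'.posPart,
      integral_integral_dist_comm μ'.posPart ν'.negPart,
      integral_integral_dist_comm μ'.negPart ν'.posPart,
      integral_integral_dist_comm μ'.negPart ν'.negPart]
    ring
  all_goals exact (continuous_integral_dist _).integrable_of_compactSpace _

theorem en_add_right (σ μ ν : SignedMeasure X) :
    en (fun x y => dist x y) σ (μ + ν) =
      en (fun x y => dist x y) σ μ + en (fun x y => dist x y) σ ν := by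
  rw [en_comm, en_add_left, en_comm μ, en_comm ν]

theorem en_smul_right (r : ℝ) (σ μ : SignedMeasure X) :
    en (fun x y => dist x y) σ (r • μ) = r * en (fun x y => dist x y) σ μ := by
  rw [en_comm, en_smul_left, en_comm]

/-- The paper's semi-inner product minus `μ(X) ν(X)`. On `M₁(X)` it is `M(X) - I(μ)`, so it
tends to `0` exactly along maximal sequences, and it agrees with `(μ | ν)` when `ν(X) = 0`. -/
noncomputable def energyForm (m : ℝ) : LinearMap.BilinForm ℝ (SignedMeasure X) :=
  LinearMap.mk₂ ℝ (fun μ ν => m * μ Set.univ * ν Set.univ - en (fun x y => dist x y) μ ν)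
    (fun μ ν σ => by simp only [add_apply, en_add_left]; ring)
    (fun r μ σ => by simp only [smul_apply, en_smul_left, smul_eq_mul]; ring)
    (fun σ μ ν => by simp only [add_apply, en_add_right]; ring)
    (fun r σ μ => by simp only [smul_apply, en_smul_right, smul_eq_mul]; ring)

theorem energyForm_apply (m : ℝ) (μ ν : SignedMeasure X) :
    energyForm m μ ν = m * μ Set.univ * ν Set.univ - en (fun x y => dist x y) μ ν :=
  rfl

theorem energyForm_isSymm (m : ℝ) : LinearMap.IsSymm (energyForm (X := X) m) :=
  ⟨fun μ ν => by simp only [energyForm_apply, RingHom.id_apply, en_comm μ]; ring⟩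

theorem energyForm_apply_self_nonneg {m : ℝ}
    (hq : ∀ ν : SignedMeasure X, ν Set.univ = 0 → en (fun x y => dist x y) ν ν ≤ 0)
    (hm : m ∈ upperBounds (MSet X)) (μ : SignedMeasure X) : 0 ≤ energyForm m μ μ := by
  rw [energyForm_apply]
  rcases eq_or_ne (μ Set.univ) 0 with h₀ | h₀
  · rw [h₀, mul_zero, zero_sub, neg_nonneg]
    exact hq μ h₀
  · set a := μ Set.univ
    have hnorm : ((a⁻¹ : ℝ) • μ) Set.univ = 1 := by
      rw [smul_apply, smul_eq_mul, inv_mul_cancel₀ h₀]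
    have hle := hm ⟨_, hnorm, rfl⟩
    rw [en_smul_left, en_smul_right, ← mul_assoc, ← mul_inv,
      inv_mul_le_iff₀ (mul_self_pos.2 h₀)] at hle
    linarith

theorem exists_energyForm_lt {m : ℝ} (hm : IsLUB (MSet X) m) {ε : ℝ} (hε : 0 < ε) :
    ∃ σ, mass X σ = 1 ∧ energyForm m σ σ < ε := by
  obtain ⟨r, ⟨σ, hσ₁, rfl⟩, hlt, -⟩ := hm.exists_between (sub_lt_self m hε)
  refine ⟨σ, hσ₁, ?_⟩
  rw [energyForm_apply, hσ₁]
  linarith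

end CompactMetric

/-- A sequence `μ_n` in `M₁(X)` is maximal (`I(μ_n) → M(X)`) if and only if it is
Cauchy in the seminorm of `E(X)` (given by `(μ|ν) = (M(X)+1)μ(X)ν(X) - I(μ,ν)`) and
`(μ_n | ν) → 0` for every mass-zero signed measure `ν`. -/
theorem stmt10 {X : Type*} [MetricSpace X] [CompactSpace X] [MeasurableSpace X] [BorelSpace X]
    (hq : ∀ ν : SignedMeasure X, ν Set.univ = (0 : ℝ) → en (fun x y => dist x y) ν ν ≤ 0)
    (m : ℝ) (hm : IsLUB (MSet X) m)
    (μ : ℕ → SignedMeasure X) (hμ : ∀ n, (μ n) Set.univ = (1 : ℝ)) :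
    Filter.Tendsto (fun n => en (fun x y => dist x y) (μ n) (μ n)) Filter.atTop (nhds m) ↔
      ((∀ ε > (0 : ℝ), ∃ N : ℕ, ∀ p ≥ N, ∀ q ≥ N,
          Real.sqrt ((m + 1) * ((μ p - μ q) Set.univ) ^ 2 -
            en (fun x y => dist x y) (μ p - μ q) (μ p - μ q)) < ε) ∧
        ∀ ν : SignedMeasure X, ν Set.univ = (0 : ℝ) →
          Filter.Tendsto
            (fun n => (m + 1) * ((μ n) Set.univ) * (ν Set.univ) -
              en (fun x y => dist x y) (μ n) ν)
            Filter.atTop (nhds 0)) := by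
  have hmaximal : Tendsto (fun n => en (fun x y => dist x y) (μ n) (μ n)) atTop (nhds m) ↔
      Tendsto (fun n => energyForm m (μ n) (μ n)) atTop (nhds 0) := by
    simp only [energyForm_apply, hμ, mul_one]
    exact ⟨fun h => by simpa using h.const_sub m, fun h => by simpa using h.const_sub m⟩
  have hdiff : ∀ p q, (μ p - μ q) Set.univ = 0 := fun p q => by
    rw [sub_apply, hμ, hμ, sub_self]
  rw [hmaximal, LinearMap.BilinForm.tendsto_apply_self_iff
    (energyForm_apply_self_nonneg hq hm.1) (energyForm_isSymm m) (mass X)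
    (fun _ => exists_energyForm_lt hm) hμ]
  refine and_congr (by simp only [energyForm_apply, hdiff]; ring_nf) <|
    forall_congr' fun ν => imp_congr_right fun hν => ?_
  replace hν : ν Set.univ = 0 := hν
  simp only [energyForm_apply, hμ, hν]
  ring_nf
end
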